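/- Let H be a complex Hilbert space, Ω nonempty, k : Ω → H unit vectors, A, B bounded operators with B invertible, r > 0, ‖(A−B) k(λ)‖ ≤ r for all λ ∈ Ω, and ‖B⁻¹‖ < 1/r. Then 0 ≤ (sup_λ ‖A k(λ)‖)² ‖B‖² − (sup_λ |⟨B* A k(λ), k(λ)⟩|)² ≤ 2 (sup_λ |⟨B* A k(λ), k(λ)⟩|) · (‖B‖/‖B⁻¹‖) · (‖B‖·‖B⁻¹‖ − √(1 − r²‖B⁻¹‖²)). -/

import Mathlib

/-!
Write `N = sup ‖A k‖`, `p = sup |⟨A k, B k⟩|` (the Berezin number of `B* A`), `b = ‖B⁻¹‖` and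
`t = √(1 - r² b²)`. Expanding `‖A k - B k‖² ≤ r²` and using `‖B k‖ ≥ 1 / b` for unit `k` gives
`N² ≤ 2 p + r² - 1 / b²`. Since `(‖B‖ t / b)² = ‖B‖² (1 / b² - r²)`, the upper bound is then just
`(p - ‖B‖ t / b)² ≥ 0`. The lower bound is Cauchy–Schwarz: `p ≤ N ‖B‖`.
-/

open scoped InnerProductSpace

theorem sq_ciSup_le_of_nonneg {ι : Sort*} [Nonempty ι] {f : ι → ℝ} {c : ℝ} (hf₀ : ∀ i, 0 ≤ f i)
    (hf : ∀ i, f i ^ 2 ≤ c) : (⨆ i, f i) ^ 2 ≤ c := by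
  obtain ⟨i⟩ := ‹Nonempty ι›
  have hc : 0 ≤ c := (sq_nonneg _).trans (hf i)
  have hle : (⨆ i, f i) ≤ √c := ciSup_le fun i => (Real.le_sqrt (hf₀ i) hc).2 (hf i)
  calc (⨆ i, f i) ^ 2 ≤ √c ^ 2 := pow_le_pow_left₀ (Real.iSup_nonneg hf₀) hle 2
    _ = c := Real.sq_sqrt hc

theorem norm_sq_le_of_norm_sub_le {𝕜 E : Type*} [RCLike 𝕜] [SeminormedAddCommGroup E]
    [InnerProductSpace 𝕜 E] {x y : E} {r c : ℝ} (hxy : ‖x - y‖ ≤ r) (hc : 0 ≤ c) (hy : c ≤ ‖y‖) :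
    ‖x‖ ^ 2 ≤ 2 * ‖⟪x, y⟫_𝕜‖ + r ^ 2 - c ^ 2 := by
  have hexpand := norm_sub_sq (𝕜 := 𝕜) x y
  have hre : RCLike.re ⟪x, y⟫_𝕜 ≤ ‖⟪x, y⟫_𝕜‖ := RCLike.re_le_norm _
  have hr : ‖x - y‖ ^ 2 ≤ r ^ 2 := pow_le_pow_left₀ (norm_nonneg _) hxy 2
  have hc' : c ^ 2 ≤ ‖y‖ ^ 2 := pow_le_pow_left₀ hc hy 2
  linarith

theorem sq_mul_sq_sub_sq_le {N p β b r : ℝ} (hb : 0 < b) (hrb : r ^ 2 * b ^ 2 ≤ 1)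
    (hN : N ^ 2 ≤ 2 * p + r ^ 2 - b⁻¹ ^ 2) :
    N ^ 2 * β ^ 2 - p ^ 2 ≤ 2 * p * (β / b) * (β * b - √(1 - r ^ 2 * b ^ 2)) := by
  set t := √(1 - r ^ 2 * b ^ 2)
  have ht : (β * t / b) ^ 2 = β ^ 2 * (b⁻¹ ^ 2 - r ^ 2) := by
    rw [div_pow, mul_pow, Real.sq_sqrt (sub_nonneg.2 hrb)]
    field_simp
  have hrhs : 2 * p * (β / b) * (β * b - t) = 2 * p * β ^ 2 - 2 * p * (β * t / b) := by
    field_simp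
  calc N ^ 2 * β ^ 2 - p ^ 2 ≤ (2 * p + r ^ 2 - b⁻¹ ^ 2) * β ^ 2 - p ^ 2 := by gcongr
    _ = 2 * p * β ^ 2 - p ^ 2 - (β * t / b) ^ 2 := by rw [ht]; ring
    _ ≤ 2 * p * (β / b) * (β * b - t) := by nlinarith [sq_nonneg (p - β * t / b)]

theorem ContinuousLinearMap.norm_le_opNorm_mul_norm_apply_of_comp_eq_id {𝕜 E F : Type*}
    [NontriviallyNormedField 𝕜] [SeminormedAddCommGroup E] [SeminormedAddCommGroup F]
    [NormedSpace 𝕜 E] [NormedSpace 𝕜 F] {B : E →L[𝕜] F} {C : F →L[𝕜] E}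
    (hCB : C.comp B = ContinuousLinearMap.id 𝕜 E) (x : E) : ‖x‖ ≤ ‖C‖ * ‖B x‖ := by
  simpa [← ContinuousLinearMap.comp_apply, hCB] using C.le_opNorm (B x)

section UnitVectors

variable {𝕜 E F Ω : Type*} [RCLike 𝕜] [SeminormedAddCommGroup E] [InnerProductSpace 𝕜 E]
  [SeminormedAddCommGroup F] [InnerProductSpace 𝕜 F] {k : Ω → E} (A B : E →L[𝕜] F)

theorem bddAbove_range_norm_apply (hk : ∀ l, ‖k l‖ ≤ 1) : BddAbove (Set.range fun l => ‖A (k l)‖) :=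
  ⟨‖A‖, Set.forall_mem_range.2 fun l => A.unit_le_opNorm _ (hk l)⟩

theorem bddAbove_range_norm_inner_apply (hk : ∀ l, ‖k l‖ ≤ 1) :
    BddAbove (Set.range fun l => ‖⟪A (k l), B (k l)⟫_𝕜‖) :=
  ⟨‖A‖ * ‖B‖, Set.forall_mem_range.2 fun l => (norm_inner_le_norm _ _).trans <|
    mul_le_mul (A.unit_le_opNorm _ (hk l)) (B.unit_le_opNorm _ (hk l)) (norm_nonneg _)
      (norm_nonneg _)⟩

theorem ciSup_norm_inner_apply_le [Nonempty Ω] (hk : ∀ l, ‖k l‖ ≤ 1) :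
    ⨆ l, ‖⟪A (k l), B (k l)⟫_𝕜‖ ≤ (⨆ l, ‖A (k l)‖) * ‖B‖ :=
  ciSup_le fun l => (norm_inner_le_norm _ _).trans <|
    mul_le_mul (le_ciSup (bddAbove_range_norm_apply A hk) l) (B.unit_le_opNorm _ (hk l))
      (norm_nonneg _) (Real.iSup_nonneg fun _ => norm_nonneg _)

end UnitVectors

open ContinuousLinearMap in
theorem stmt_7_general {H : Type*} [NormedAddCommGroup H] [InnerProductSpace ℂ H] [CompleteSpace H]
    {Ω : Type*} [Nonempty Ω] (k : Ω → H) (hk : ∀ l, ‖k l‖ = 1)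
    (A B Binv : H →L[ℂ] H)
    (hB2 : Binv.comp B = ContinuousLinearMap.id ℂ H)
    (r : ℝ) (hr : 0 < r) (h : ∀ l, ‖(A - B) (k l)‖ ≤ r)
    (h2 : ‖Binv‖ < 1 / r) :
    0 ≤ (⨆ l, ‖A (k l)‖) ^ 2 * ‖B‖ ^ 2 -
        (⨆ l, ‖(inner ℂ ((adjoint B) (A (k l))) (k l) : ℂ)‖) ^ 2 ∧
      (⨆ l, ‖A (k l)‖) ^ 2 * ‖B‖ ^ 2 -
          (⨆ l, ‖(inner ℂ ((adjoint B) (A (k l))) (k l) : ℂ)‖) ^ 2 ≤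
        2 * (⨆ l, ‖(inner ℂ ((adjoint B) (A (k l))) (k l) : ℂ)‖) * (‖B‖ / ‖Binv‖) *
          (‖B‖ * ‖Binv‖ - Real.sqrt (1 - r ^ 2 * ‖Binv‖ ^ 2)) := by
  obtain ⟨l₀⟩ := ‹Nonempty Ω›
  simp_rw [adjoint_inner_left]
  have hk₁ : ∀ l, ‖k l‖ ≤ 1 := fun l => (hk l).le
  have hBk : ∀ l, 1 ≤ ‖Binv‖ * ‖B (k l)‖ := fun l =>
    hk l ▸ norm_le_opNorm_mul_norm_apply_of_comp_eq_id hB2 (k l)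
  have hb : 0 < ‖Binv‖ := pos_of_mul_pos_left (one_pos.trans_le (hBk l₀)) (norm_nonneg _)
  have hrb : r ^ 2 * ‖Binv‖ ^ 2 ≤ 1 := by
    rw [← mul_pow]
    exact pow_le_one₀ (by positivity) (by rw [lt_div_iff₀ hr] at h2; linarith)
  refine ⟨sub_nonneg.2 ?_, sq_mul_sq_sub_sq_le hb hrb ?_⟩
  · rw [← mul_pow]
    exact pow_le_pow_left₀ (Real.iSup_nonneg fun _ => norm_nonneg _)
      (ciSup_norm_inner_apply_le A B hk₁) 2
  · refine sq_ciSup_le_of_nonneg (fun _ => norm_nonneg _) fun l => ?_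
    calc ‖A (k l)‖ ^ 2 ≤ 2 * ‖⟪A (k l), B (k l)⟫_ℂ‖ + r ^ 2 - ‖Binv‖⁻¹ ^ 2 :=
          norm_sq_le_of_norm_sub_le (h l) (inv_nonneg.2 hb.le)
            ((inv_le_iff_one_le_mul₀' hb).2 (hBk l))
      _ ≤ _ := by gcongr; exact le_ciSup (bddAbove_range_norm_inner_apply A B hk₁) l

open ContinuousLinearMap in
theorem stmt_7 {H : Type*} [NormedAddCommGroup H] [InnerProductSpace ℂ H] [CompleteSpace H]
    {Ω : Type*} [Nonempty Ω] (k : Ω → H) (hk : ∀ l, ‖k l‖ = 1)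
    (A B Binv : H →L[ℂ] H)
    (hB1 : B.comp Binv = ContinuousLinearMap.id ℂ H)
    (hB2 : Binv.comp B = ContinuousLinearMap.id ℂ H)
    (r : ℝ) (hr : 0 < r) (h : ∀ l, ‖(A - B) (k l)‖ ≤ r)
    (h2 : ‖Binv‖ < 1 / r) :
    0 ≤ (⨆ l, ‖A (k l)‖) ^ 2 * ‖B‖ ^ 2 -
        (⨆ l, ‖(inner ℂ ((adjoint B) (A (k l))) (k l) : ℂ)‖) ^ 2 ∧
      (⨆ l, ‖A (k l)‖) ^ 2 * ‖B‖ ^ 2 -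
          (⨆ l, ‖(inner ℂ ((adjoint B) (A (k l))) (k l) : ℂ)‖) ^ 2 ≤
        2 * (⨆ l, ‖(inner ℂ ((adjoint B) (A (k l))) (k l) : ℂ)‖) * (‖B‖ / ‖Binv‖) *
          (‖B‖ * ‖Binv‖ - Real.sqrt (1 - r ^ 2 * ‖Binv‖ ^ 2)) :=
  stmt_7_general k hk A B Binv hB2 r hr h h2
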